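/- For the manifold N̂⁷ constructed as the base of the 2-sheeted covering N⁷ = (S³×S³) ⋊ S¹ → N̂⁷ (quotient of the 4-fold covering structure by pairs of antipodal 2-point configurations), with characteristic class p ∈ H¹(N̂⁷; Z/2) of this covering, the mod 2 characteristic number ⟨p⁷, [N̂⁷]⟩ equals 1. -/

import Mathlib

open Metric

/-- The standard 3-sphere `S³ ⊂ ℝ⁴`. -/
abbrev Sph3 := Metric.sphere (0 : EuclideanSpace ℝ (Fin 4)) 1

/-- The standard 7-sphere `S⁷ ⊂ ℝ⁸`. -/
abbrev Sph7 := Metric.sphere (0 : EuclideanSpace ℝ (Fin 8)) 1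

/-- Antipodal map on a sphere (as a subtype map). -/
def sphereNeg {n : ℕ} (x : Metric.sphere (0 : EuclideanSpace ℝ (Fin n)) 1) :
    Metric.sphere (0 : EuclideanSpace ℝ (Fin n)) 1 :=
  ⟨-(x : EuclideanSpace ℝ (Fin n)), by simpa using x.2⟩

/-- The swap involution on `S³ × S³`. -/
def swapMap (x : Sph3 × Sph3) : Sph3 × Sph3 := (x.2, x.1)

/-- The generating relation of the mapping torus of `g`: `(x,t) ∼ (g x, t+1)`. -/
def mtRel {X : Type*} (g : X → X) (a b : X × ℝ) : Prop := b = (g a.1, a.2 + 1)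

/-- The mapping torus `(S³×S³) ⋊ S¹`-style quotient of `X × ℝ`. -/
def MappingTorus {X : Type*} [TopologicalSpace X] (g : X → X) : Type _ := Quot (mtRel g)

instance {X : Type*} [TopologicalSpace X] (g : X → X) : TopologicalSpace (MappingTorus g) :=
  instTopologicalSpaceQuot

/-- The antipodal relation on `S⁷`. -/
def antipRel7 (a b : Sph7) : Prop :=
  (b : EuclideanSpace ℝ (Fin 8)) = -(a : EuclideanSpace ℝ (Fin 8))

/-- `ℝP⁷ = S⁷/antipodal`. -/
def RP7 : Type _ := Quot antipRel7

noncomputable instance : TopologicalSpace RP7 := instTopologicalSpaceQuot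

/-!
The covering `N → N̂` is classified by the map `N̂ → ℝP⁷` induced by an odd map `F̃ : N → S⁷`,
and `⟨p⁷, [N̂]⟩` is the mod 2 degree of that map. Writing `c = cos πt`, `s = sin πt` and
`r⁺ = max r 0`, `r⁻ = max (-r) 0`, take `F̃(x, y, t) = (c⁺x + c⁻y, s⁺y + s⁻x) ∈ ℝ⁴ × ℝ⁴`.
Since `c⁺c⁻ = s⁺s⁻ = 0` this is a unit vector; shifting `t` by `1` negates `c` and `s`, which
exactly undoes the swap of `x` and `y`, so `F̃` is defined on the mapping torus; and it is odd
under `(x, y) ↦ (-x, -y)`. For `t₀ = 1/4` both `c` and `s` are positive, and the value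
`F̃(e₀, e₁, t₀) = (c e₀, s e₁)` is taken at exactly one point of `N`, so the corresponding point
of `ℝP⁷` has exactly one preimage in `N̂`.
-/

open Real

section Blend

variable {E : Type*}

def blend [AddCommGroup E] [Module ℝ E] (c : ℝ) (x y : E) : E := c⁺ • x + c⁻ • y

section Module

variable [AddCommGroup E] [Module ℝ E] {c : ℝ}

theorem blend_of_nonneg (hc : 0 ≤ c) (x y : E) : blend c x y = c • x := by
  simp [blend, posPart_eq_self.2 hc, negPart_eq_zero.2 hc]

theorem blend_of_nonpos (hc : c ≤ 0) (x y : E) : blend c x y = (-c) • y := by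
  simp [blend, posPart_eq_zero.2 hc, negPart_eq_neg.2 hc]

theorem blend_neg (c : ℝ) (x y : E) : blend (-c) x y = blend c y x := by
  rw [blend, blend, posPart_neg, negPart_neg, add_comm]

theorem blend_neg_neg (c : ℝ) (x y : E) : blend c (-x) (-y) = -blend c x y := by
  rw [blend, blend, smul_neg, smul_neg, neg_add]

end Module

section Normed

variable [NormedAddCommGroup E] [NormedSpace ℝ E] {c : ℝ} {x y : E}

theorem norm_blend (hx : ‖x‖ = 1) (hy : ‖y‖ = 1) : ‖blend c x y‖ = |c| := by
  rcases le_total 0 c with hc | hc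
  · rw [blend_of_nonneg hc, norm_smul, hx, mul_one, norm_eq_abs]
  · rw [blend_of_nonpos hc, norm_smul, hy, mul_one, norm_neg, norm_eq_abs]

theorem blend_eq_smul {a : ℝ} {u : E} (hx : ‖x‖ = 1) (hy : ‖y‖ = 1) (hu : ‖u‖ = 1) (ha : 0 < a)
    (h : blend c x y = a • u) : c = a ∧ x = u ∨ c = -a ∧ y = u := by
  have habs : |c| = a := by
    rw [← norm_blend hx hy, h, norm_smul, hu, mul_one, norm_of_nonneg ha.le]
  rcases le_total 0 c with hc | hc
  · have hca : c = a := (abs_of_nonneg hc).symm.trans habs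
    rw [blend_of_nonneg hc, hca] at h
    exact Or.inl ⟨hca, smul_right_injective E ha.ne' h⟩
  · have hca : -c = a := (abs_of_nonpos hc).symm.trans habs
    rw [blend_of_nonpos hc, hca] at h
    exact Or.inr ⟨by linarith, smul_right_injective E ha.ne' h⟩

@[fun_prop]
theorem Continuous.blend {X : Type*} [TopologicalSpace X] {c : X → ℝ} {x y : X → E}
    (hc : Continuous c) (hx : Continuous x) (hy : Continuous y) :
    Continuous fun z => _root_.blend (c z) (x z) (y z) := by
  simp only [_root_.blend, posPart_def, negPart_def]
  fun_prop

end Normed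

end Blend

theorem exists_int_eq_add_mul_two_of_cos_eq_of_sin_eq {t s : ℝ} (hc : cos (π * t) = cos (π * s))
    (hs : sin (π * t) = sin (π * s)) : ∃ k : ℤ, t = s + k * 2 := by
  obtain ⟨k, hk⟩ := Real.Angle.angle_eq_iff_two_pi_dvd_sub.1 (Real.Angle.cos_sin_inj hc hs)
  have hπ : π * (t - s - k * 2) = 0 := by linear_combination hk
  exact ⟨k, by linarith [(mul_eq_zero.1 hπ).resolve_left pi_ne_zero]⟩

theorem norm_finAddEquivProd_symm_sq {m n : ℕ} (u : EuclideanSpace ℝ (Fin m))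
    (v : EuclideanSpace ℝ (Fin n)) :
    ‖EuclideanSpace.finAddEquivProd.symm (u, v)‖ ^ 2 = ‖u‖ ^ 2 + ‖v‖ ^ 2 := by
  simp [WithLp.prod_norm_sq_eq_of_L2]

section TwistedJoin

variable {n : ℕ} {x y : EuclideanSpace ℝ (Fin n)}

noncomputable def twistedJoin (x y : EuclideanSpace ℝ (Fin n)) (t : ℝ) :
    EuclideanSpace ℝ (Fin (n + n)) :=
  EuclideanSpace.finAddEquivProd.symm (blend (cos (π * t)) x y, blend (sin (π * t)) y x)

theorem twistedJoin_add_one (x y : EuclideanSpace ℝ (Fin n)) (t : ℝ) :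
    twistedJoin y x (t + 1) = twistedJoin x y t := by
  rw [twistedJoin, twistedJoin, mul_add, mul_one, cos_add_pi, sin_add_pi, blend_neg, blend_neg]

theorem twistedJoin_neg (x y : EuclideanSpace ℝ (Fin n)) (t : ℝ) :
    twistedJoin (-x) (-y) t = -twistedJoin x y t := by
  rw [twistedJoin, twistedJoin, blend_neg_neg, blend_neg_neg, ← Prod.neg_mk, map_neg]

theorem norm_twistedJoin (hx : ‖x‖ = 1) (hy : ‖y‖ = 1) (t : ℝ) : ‖twistedJoin x y t‖ = 1 := by
  have hsq : ‖twistedJoin x y t‖ ^ 2 = 1 ^ 2 := by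
    rw [twistedJoin, norm_finAddEquivProd_symm_sq, norm_blend hx hy, norm_blend hy hx, sq_abs,
      sq_abs, cos_sq_add_sin_sq, one_pow]
  exact (sq_eq_sq₀ (norm_nonneg _) zero_le_one).1 hsq

@[fun_prop]
theorem Continuous.twistedJoin {X : Type*} [TopologicalSpace X]
    {x y : X → EuclideanSpace ℝ (Fin n)} {t : X → ℝ}
    (hx : Continuous x) (hy : Continuous y) (ht : Continuous t) :
    Continuous fun z => _root_.twistedJoin (x z) (y z) (t z) := by
  unfold _root_.twistedJoin
  fun_prop

theorem eq_of_twistedJoin_eq_twistedJoin {u w : EuclideanSpace ℝ (Fin n)} {t t₀ : ℝ}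
    (hx : ‖x‖ = 1) (hy : ‖y‖ = 1) (hu : ‖u‖ = 1) (hw : ‖w‖ = 1) (huw : u ≠ w)
    (hc₀ : 0 < cos (π * t₀)) (hs₀ : 0 < sin (π * t₀))
    (h : twistedJoin x y t = twistedJoin u w t₀) :
    (x = u ∧ y = w ∧ ∃ k : ℤ, t = t₀ + k * 2) ∨
      (x = w ∧ y = u ∧ ∃ k : ℤ, t = t₀ + 1 + k * 2) := by
  obtain ⟨hfst, hsnd⟩ := Prod.ext_iff.1 (EuclideanSpace.finAddEquivProd.symm.injective h)
  rw [blend_of_nonneg hc₀.le] at hfst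
  rw [blend_of_nonneg hs₀.le] at hsnd
  have hcos : cos (π * (t₀ + 1)) = -cos (π * t₀) := by rw [mul_add, mul_one, cos_add_pi]
  have hsin : sin (π * (t₀ + 1)) = -sin (π * t₀) := by rw [mul_add, mul_one, sin_add_pi]
  rcases blend_eq_smul hx hy hu hc₀ hfst with ⟨hc, rfl⟩ | ⟨hc, rfl⟩ <;>
    rcases blend_eq_smul hy hx hw hs₀ hsnd with ⟨hs, rfl⟩ | ⟨hs, rfl⟩
  · exact Or.inl ⟨rfl, rfl, exists_int_eq_add_mul_two_of_cos_eq_of_sin_eq hc hs⟩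
  · exact absurd rfl huw
  · exact absurd rfl huw
  · exact Or.inr ⟨rfl, rfl, exists_int_eq_add_mul_two_of_cos_eq_of_sin_eq
      (hc.trans hcos.symm) (hs.trans hsin.symm)⟩

end TwistedJoin

namespace MappingTorus

variable {X : Type*} {g : X → X}

theorem mk_apply_add_one (x : X) (t : ℝ) :
    Quot.mk (mtRel g) (g x, t + 1) = Quot.mk (mtRel g) (x, t) :=
  (Quot.sound (show mtRel g (x, t) (g x, t + 1) from rfl)).symm

theorem periodic_mk (hg : Function.Involutive g) (x : X) :
    Function.Periodic (fun t => Quot.mk (mtRel g) (x, t)) 2 := fun t => by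
  show Quot.mk (mtRel g) (x, t + 2) = Quot.mk (mtRel g) (x, t)
  conv_lhs => rw [← hg x, show t + 2 = t + 1 + 1 by ring]
  rw [mk_apply_add_one, mk_apply_add_one]

end MappingTorus

noncomputable def sph3Basis (i : Fin 4) : Sph3 := ⟨EuclideanSpace.single i 1, by simp⟩

noncomputable def torusToSphere : MappingTorus swapMap → Sph7 :=
  Quot.lift (fun a => ⟨twistedJoin (a.1.1 : EuclideanSpace ℝ (Fin 4)) a.1.2 a.2,
      mem_sphere_zero_iff_norm.2 (norm_twistedJoin (by simp) (by simp) _)⟩)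
    (fun a b h => by subst h; exact Subtype.ext (twistedJoin_add_one _ _ _).symm)

theorem continuous_torusToSphere : Continuous torusToSphere :=
  continuous_quot_lift _ (Continuous.subtype_mk (by fun_prop) _)

theorem torusToSphere_mk_sphereNeg (a : (Sph3 × Sph3) × ℝ) :
    (torusToSphere (Quot.mk _ ((sphereNeg a.1.1, sphereNeg a.1.2), a.2)) :
        EuclideanSpace ℝ (Fin 8)) = -torusToSphere (Quot.mk _ a) :=
  twistedJoin_neg _ _ _

noncomputable def torusBasePoint : MappingTorus swapMap :=
  Quot.mk _ ((sph3Basis 0, sph3Basis 1), 1 / 4)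

theorem torusToSphere_preimage_basePoint :
    torusToSphere ⁻¹' {torusToSphere torusBasePoint} = {torusBasePoint} := by
  have hnorm (i : Fin 4) : ‖(sph3Basis i : EuclideanSpace ℝ (Fin 4))‖ = 1 := by simp [sph3Basis]
  have hne : (sph3Basis 0 : EuclideanSpace ℝ (Fin 4)) ≠ sph3Basis 1 := fun h => by
    simpa [sph3Basis] using congrArg (· 0) h
  have hcos : 0 < cos (π * (1 / 4)) :=
    cos_pos_of_mem_Ioo ⟨by linarith [pi_pos], by linarith [pi_pos]⟩
  have hsin : 0 < sin (π * (1 / 4)) :=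
    sin_pos_of_pos_of_lt_pi (by positivity) (by linarith [pi_pos])
  have hper := MappingTorus.periodic_mk (g := swapMap) (fun _ => rfl)
  ext q
  induction q using Quot.ind with | mk a => ?_
  obtain ⟨⟨x, y⟩, t⟩ := a
  refine ⟨fun h => ?_, fun h => h ▸ rfl⟩
  rcases eq_of_twistedJoin_eq_twistedJoin (by simp) (by simp) (hnorm 0) (hnorm 1) hne hcos hsin
    (congrArg Subtype.val h) with ⟨hx, hy, k, rfl⟩ | ⟨hx, hy, k, rfl⟩
  · obtain rfl : x = sph3Basis 0 := Subtype.ext hx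
    obtain rfl : y = sph3Basis 1 := Subtype.ext hy
    exact (hper _).int_mul k _
  · obtain rfl : x = sph3Basis 1 := Subtype.ext hx
    obtain rfl : y = sph3Basis 0 := Subtype.ext hy
    exact ((hper _).int_mul k _).trans
      (MappingTorus.mk_apply_add_one (g := swapMap) (sph3Basis 0, sph3Basis 1) (1 / 4))

theorem eq_or_eq_neg_of_quot_mk_eq {a b : Sph7} (h : Quot.mk antipRel7 a = Quot.mk antipRel7 b) :
    a = b ∨ (a : EuclideanSpace ℝ (Fin 8)) = -b := by
  have hequiv : Equivalence fun a b : Sph7 => a = b ∨ (a : EuclideanSpace ℝ (Fin 8)) = -b :=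
    ⟨fun _ => Or.inl rfl,
     fun {a b} h => h.imp Eq.symm fun h => by rw [h, neg_neg],
     fun {a b c} hab hbc => by
       rcases hab with rfl | hab <;> rcases hbc with rfl | hbc
       exacts [Or.inl rfl, Or.inr hbc, Or.inr hab,
         Or.inl (Subtype.ext (by rw [hab, hbc, neg_neg]))]⟩
  refine hequiv.eqvGen_iff.1
    (Relation.EqvGen.mono (fun a b hab => Or.inr ?_) _ _ (Quot.eqvGen_exact h))
  rw [show (b : EuclideanSpace ℝ (Fin 8)) = -a from hab, neg_neg]

section OddMap

variable {N B : Type*} {p : N → B} {T : N → N} {f : N → Sph7}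

theorem exists_continuous_quot_mk_comp_eq [TopologicalSpace N] [TopologicalSpace B]
    (hp : Topology.IsQuotientMap p) (hfib : ∀ z, ∃ x, p ⁻¹' {z} = {x, T x}) (hf : Continuous f)
    (hodd : ∀ x, (f (T x) : EuclideanSpace ℝ (Fin 8)) = -f x) :
    ∃ F : B → RP7, Continuous F ∧ ∀ x, Quot.mk antipRel7 (f x) = F (p x) := by
  let q : C(N, B) := ⟨p, hp.continuous⟩
  let g : C(N, RP7) := ⟨fun x => Quot.mk antipRel7 (f x), continuous_quot_mk.comp hf⟩
  have hfactor : Function.FactorsThrough g q := by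
    intro a b hab
    obtain ⟨x, hx⟩ := hfib (p b)
    have ha : a ∈ p ⁻¹' {p b} := hab
    have hb : b ∈ p ⁻¹' {p b} := rfl
    have hxT : Quot.mk antipRel7 (f x) = Quot.mk antipRel7 (f (T x)) := Quot.sound (hodd x)
    rw [hx] at ha hb
    rcases ha with rfl | rfl <;> rcases hb with rfl | rfl
    exacts [rfl, hxT, hxT.symm, rfl]
  exact ⟨hp.lift (f := q) g hfactor, ContinuousMap.continuous _,
    fun x => (DFunLike.congr_fun (hp.lift_comp (f := q) g hfactor) x).symm⟩

theorem preimage_quot_mk_eq_singleton {F : B → RP7} {v : Sph7} {x₀ : N}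
    (hfib : ∀ z, ∃ x, p ⁻¹' {z} = {x, T x})
    (hodd : ∀ x, (f (T x) : EuclideanSpace ℝ (Fin 8)) = -f x)
    (hF : ∀ x, Quot.mk antipRel7 (f x) = F (p x)) (hv : f ⁻¹' {v} = {x₀}) :
    F ⁻¹' {(Quot.mk antipRel7 v : RP7)} = {p x₀} := by
  ext z
  refine ⟨fun hz => ?_, ?_⟩
  · obtain ⟨x, hx⟩ := hfib z
    have hxz : p x = z := (hx ▸ Or.inl rfl : x ∈ p ⁻¹' {z})
    have hTxz : p (T x) = z := (hx ▸ Or.inr rfl : T x ∈ p ⁻¹' {z})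
    change F z = Quot.mk antipRel7 v at hz
    rw [← hxz, ← hF] at hz
    obtain ⟨w, hwz, hwv⟩ : ∃ w, p w = z ∧ w ∈ f ⁻¹' {v} := by
      rcases eq_or_eq_neg_of_quot_mk_eq hz with h | h
      exacts [⟨x, hxz, h⟩, ⟨T x, hTxz, Subtype.ext (by rw [hodd, h, neg_neg])⟩]
    rw [hv, Set.mem_singleton_iff] at hwv
    rw [← hwz, hwv]
    rfl
  · rintro rfl
    have : x₀ ∈ f ⁻¹' {v} := hv ▸ rfl
    exact (hF x₀).symm.trans (congrArg _ this)

end OddMap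

theorem characteristic_number_p7_is_one_general
    (N Nhat : Type) [TopologicalSpace N] [TopologicalSpace Nhat]
    (e : N ≃ₜ MappingTorus swapMap)          -- N is the mapping torus of the swap
    (p : N → Nhat) (hp : IsCoveringMap p)
    (T : N → N)
    (hfib : ∀ y : Nhat, ∃ x, p ⁻¹' {y} = {x, T x})
    -- T is induced by the diagonal antipodal involution on the fibers S³ × S³
    (hT : ∀ a : (Sph3 × Sph3) × ℝ,
      e (T (e.symm (Quot.mk (mtRel swapMap) a))) =
        Quot.mk (mtRel swapMap) ((sphereNeg a.1.1, sphereNeg a.1.2), a.2)) :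
    ∃ F : Nhat → RP7, Continuous F ∧
      (∃ Ft : N → Sph7, Continuous Ft ∧
        (∀ x : N, Quot.mk antipRel7 (Ft x) = F (p x)) ∧
        (∀ x : N, (Ft (T x) : EuclideanSpace ℝ (Fin 8)) =
          -(Ft x : EuclideanSpace ℝ (Fin 8)))) ∧
      ∃ y : RP7, (F ⁻¹' {y}).Finite ∧ Odd (F ⁻¹' {y}).ncard := by
  have hsurj : Function.Surjective p := fun z =>
    let ⟨x, hx⟩ := hfib z
    ⟨x, (hx ▸ Or.inl rfl : x ∈ p ⁻¹' {z})⟩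
  let f : N → Sph7 := torusToSphere ∘ e
  have hodd : ∀ x, (f (T x) : EuclideanSpace ℝ (Fin 8)) = -f x := fun x => by
    obtain ⟨a, ha⟩ := Quot.exists_rep (e x)
    have hTx := hT a
    rw [ha, e.symm_apply_apply] at hTx
    simp only [f, Function.comp_apply, hTx, ← ha]
    exact torusToSphere_mk_sphereNeg a
  have hv : f ⁻¹' {f (e.symm torusBasePoint)} = {e.symm torusBasePoint} := by
    rw [show f = torusToSphere ∘ e from rfl, Function.comp_apply, e.apply_symm_apply,
      Set.preimage_comp, torusToSphere_preimage_basePoint, ← e.image_symm, Set.image_singleton]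
  obtain ⟨F, hFc, hF⟩ :=
    exists_continuous_quot_mk_comp_eq (hp.isQuotientMap hsurj) hfib
      (continuous_torusToSphere.comp e.continuous) hodd
  have hpre := preimage_quot_mk_eq_singleton hfib hodd hF hv
  refine ⟨F, hFc, ⟨f, continuous_torusToSphere.comp e.continuous, hF, hodd⟩, _,
    (Set.finite_singleton _).subset hpre.le, ⟨0, Set.ncard_eq_one.2 ⟨_, hpre⟩⟩⟩

/-- Let `N⁷ = (S³×S³) ⋊ S¹` be the mapping torus of the factor swap and let
`p : N⁷ → N̂⁷` be the 2-sheeted covering of the paper (the quotient by the free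
involution `T` induced by the diagonal antipodal map `(x,y,t) ↦ (−x,−y,t)` — the
space of pairs of 2-point configurations up to simultaneous transposition), with
characteristic class `p ∈ H¹(N̂⁷; ℤ/2)`.  Then `⟨p⁷, [N̂⁷]⟩ = 1 (mod 2)`: there is a
continuous map `F : N̂⁷ → ℝP⁷` classifying the covering (it lifts to an equivariant
map `F̃ : N⁷ → S⁷`), whose mod 2 degree is odd, i.e. some point of `ℝP⁷` has a finite
preimage of odd cardinality. -/
theorem characteristic_number_p7_is_one
    (N Nhat : Type) [TopologicalSpace N] [TopologicalSpace Nhat] [CompactSpace Nhat]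
    (e : N ≃ₜ MappingTorus swapMap)          -- N is the mapping torus of the swap
    (p : N → Nhat) (hp : IsCoveringMap p)
    (T : N → N) (hTc : Continuous T) (hTinv : ∀ x, T (T x) = x)
    (hTfree : ∀ x, T x ≠ x) (hdeck : ∀ x, p (T x) = p x)
    (hfib : ∀ y : Nhat, ∃ x, p ⁻¹' {y} = {x, T x})
    -- T is induced by the diagonal antipodal involution on the fibers S³ × S³
    (hT : ∀ a : (Sph3 × Sph3) × ℝ,
      e (T (e.symm (Quot.mk (mtRel swapMap) a))) =
        Quot.mk (mtRel swapMap) ((sphereNeg a.1.1, sphereNeg a.1.2), a.2)) :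
    ∃ F : Nhat → RP7, Continuous F ∧
      (∃ Ft : N → Sph7, Continuous Ft ∧
        (∀ x : N, Quot.mk antipRel7 (Ft x) = F (p x)) ∧
        (∀ x : N, (Ft (T x) : EuclideanSpace ℝ (Fin 8)) =
          -(Ft x : EuclideanSpace ℝ (Fin 8)))) ∧
      ∃ y : RP7, (F ⁻¹' {y}).Finite ∧ Odd (F ⁻¹' {y}).ncard :=
  characteristic_number_p7_is_one_general N Nhat e p hp T hfib hT
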